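/- If X and Y are random variables on a finite probability space with H(Z|X)=0 and H(Z|Y)=0 (taking W trivial), then I(X;Y) ≥ H(Z). -/

import Mathlib

open Finset

/-- Probability mass of the event `X = a` under weights `p`. -/
noncomputable def pmass {Ω α : Type} [Fintype Ω] [DecidableEq α]
    (p : Ω → ℝ) (X : Ω → α) (a : α) : ℝ :=
  ∑ ω, if X ω = a then p ω else 0

/-- Shannon entropy (base 2) of a random variable `X` on a finite space. -/
noncomputable def ent {Ω α : Type} [Fintype Ω] [Fintype α] [DecidableEq α]
    (p : Ω → ℝ) (X : Ω → α) : ℝ :=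
  ∑ a, -(pmass p X a * Real.logb 2 (pmass p X a))

/-- Conditional Shannon entropy `H(X|Y) = H(X,Y) - H(Y)`. -/
noncomputable def condEnt {Ω α β : Type} [Fintype Ω] [Fintype α] [Fintype β]
    [DecidableEq α] [DecidableEq β] (p : Ω → ℝ) (X : Ω → α) (Y : Ω → β) : ℝ :=
  ent p (fun ω => (X ω, Y ω)) - ent p Y

/-- Conditional mutual information `I(X;Y|W) = H(X|W) + H(Y|W) - H(X,Y|W)`. -/
noncomputable def condMI {Ω α β γ : Type} [Fintype Ω] [Fintype α] [Fintype β] [Fintype γ]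
    [DecidableEq α] [DecidableEq β] [DecidableEq γ]
    (p : Ω → ℝ) (X : Ω → α) (Y : Ω → β) (W : Ω → γ) : ℝ :=
  condEnt p X W + condEnt p Y W - condEnt p (fun ω => (X ω, Y ω)) W

/-- Mutual information `I(X;Y) = H(X) + H(Y) - H(X,Y)`. -/
noncomputable def mutualInfo {Ω α β : Type} [Fintype Ω] [Fintype α] [Fintype β]
    [DecidableEq α] [DecidableEq β] (p : Ω → ℝ) (X : Ω → α) (Y : Ω → β) : ℝ :=
  ent p X + ent p Y - ent p (fun ω => (X ω, Y ω))

/-! Two Shannon inequalities suffice. Submodularity gives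
`H(Z,X,Y) + H(Z) ≤ H(Z,X) + H(Z,Y) = H(X) + H(Y)`, and monotonicity gives
`H(X,Y) ≤ H(Z,X,Y)`. Submodularity is, on each fibre of `Z`, subadditivity of entropy for the
unnormalized joint weights of `(X, Y)`, which follows from `log x ≤ x - 1`. -/

open Real

lemma negMulLog_sum_le {ι : Type*} (s : Finset ι) (f : ι → ℝ) (hf : ∀ i ∈ s, 0 ≤ f i) :
    negMulLog (∑ i ∈ s, f i) ≤ ∑ i ∈ s, negMulLog (f i) := by
  simp only [negMulLog_eq_neg]
  rw [Finset.sum_mul, ← Finset.sum_neg_distrib]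
  refine Finset.sum_le_sum fun i hi => neg_le_neg ?_
  rcases (hf i hi).eq_or_lt with h | h
  · simp [← h]
  · exact mul_le_mul_of_nonneg_left
      (log_le_log h (Finset.single_le_sum hf hi)) h.le

lemma sub_mul_div_le_mul_log {q r s t : ℝ} (hq : 0 ≤ q) (hqr : q ≤ r) (hqs : q ≤ s)
    (hrt : r ≤ t) : q - r * s / t ≤ q * (log q + log t - log r - log s) := by
  rcases hq.eq_or_lt with rfl | hq
  · simpa using div_nonneg (mul_nonneg hqr hqs) (hqr.trans hrt)
  have hr := hq.trans_le hqr
  have hs := hq.trans_le hqs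
  have ht := hr.trans_le hrt
  have key := mul_le_mul_of_nonneg_left
    (log_le_sub_one_of_pos (x := r * s / (q * t)) (by positivity)) hq.le
  rw [log_div (by positivity) (by positivity), log_mul hr.ne' hs.ne',
    log_mul hq.ne' ht.ne'] at key
  have hsimp : q * (r * s / (q * t) - 1) = r * s / t - q := by field_simp
  linear_combination key + hsimp

/- With `r`, `s` the marginals of `q` and `t` its total mass, the slack is
`∑ q log (q t / (r s)) ≥ ∑ (q - r s / t) = t - t * t / t = 0`. -/
lemma sum_negMulLog_add_negMulLog_sum_le {α β : Type*} [Fintype α] [Fintype β]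
    (q : α → β → ℝ) (hq : ∀ a b, 0 ≤ q a b) :
    (∑ a, ∑ b, negMulLog (q a b)) + negMulLog (∑ a, ∑ b, q a b)
      ≤ (∑ a, negMulLog (∑ b, q a b)) + ∑ b, negMulLog (∑ a, q a b) := by
  set r : α → ℝ := fun a => ∑ b, q a b
  set s : β → ℝ := fun b => ∑ a, q a b
  set t : ℝ := ∑ a, ∑ b, q a b with ht
  have hsum_r : ∑ a, r a = t := rfl
  have hsum_s : ∑ b, s b = t := Finset.sum_comm
  have hqr a b : q a b ≤ r a := Finset.single_le_sum (fun b _ => hq a b) (Finset.mem_univ b)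
  have hqs a b : q a b ≤ s b := Finset.single_le_sum (fun a _ => hq a b) (Finset.mem_univ a)
  have hr0 a : 0 ≤ r a := Finset.sum_nonneg fun b _ => hq a b
  have hrt_le a : r a ≤ t := Finset.single_le_sum (fun a _ => hr0 a) (Finset.mem_univ a)
  have hlog_r : ∑ a, ∑ b, q a b * log (r a) = ∑ a, r a * log (r a) := by
    simp only [r, Finset.sum_mul]
  have hlog_s : ∑ a, ∑ b, q a b * log (s b) = ∑ b, s b * log (s b) := by
    rw [Finset.sum_comm]; simp only [s, Finset.sum_mul]
  have hlog_t : ∑ a, ∑ b, q a b * log t = t * log t := by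
    simp only [t, Finset.sum_mul]
  have hslack : ∑ a, ∑ b, (q a b - r a * s b / t) = 0 := by
    simp only [Finset.sum_sub_distrib, ← Finset.sum_div, ← Finset.mul_sum, ← Finset.sum_mul,
      hsum_s, hsum_r, ← ht, mul_self_div_self, sub_self]
  have hgibbs : ∑ a, ∑ b, (q a b - r a * s b / t)
      ≤ ∑ a, ∑ b, q a b * (log (q a b) + log t - log (r a) - log (s b)) :=
    Finset.sum_le_sum fun a _ => Finset.sum_le_sum fun b _ =>
    sub_mul_div_le_mul_log (hq a b) (hqr a b) (hqs a b) (hrt_le a)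
  rw [hslack] at hgibbs
  simp only [mul_add, mul_sub, Finset.sum_add_distrib, Finset.sum_sub_distrib, hlog_r, hlog_s,
    hlog_t] at hgibbs
  simp only [negMulLog_eq_neg, Finset.sum_neg_distrib]
  linarith

section
variable {Ω α β γ : Type} [Fintype Ω] [DecidableEq α] [DecidableEq β] [DecidableEq γ]
  (p : Ω → ℝ)

lemma pmass_nonneg (hp0 : ∀ ω, 0 ≤ p ω) (X : Ω → α) (a : α) : 0 ≤ pmass p X a :=
  Finset.sum_nonneg fun ω _ => by split <;> simp [hp0 ω]

lemma ent_eq_sum_negMulLog [Fintype α] (X : Ω → α) :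
    ent p X = (∑ a, negMulLog (pmass p X a)) / log 2 := by
  simp only [ent, negMulLog_eq_neg, logb, Finset.sum_div, neg_div, mul_div_assoc]

lemma sum_pmass_pair_left [Fintype α] (X : Ω → α) (Y : Ω → β) (b : β) :
    ∑ a, pmass p (fun ω => (X ω, Y ω)) (a, b) = pmass p Y b := by
  simp only [pmass]; rw [Finset.sum_comm]; simp [Prod.ext_iff, ite_and]

lemma sum_pmass_pair_right [Fintype β] (X : Ω → α) (Y : Ω → β) (a : α) :
    ∑ b, pmass p (fun ω => (X ω, Y ω)) (a, b) = pmass p X a := by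
  simp only [pmass]; rw [Finset.sum_comm]; simp [Prod.ext_iff, ite_and]

lemma sum_pmass_triple_left [Fintype α] (Z : Ω → γ) (X : Ω → α) (Y : Ω → β) (c : γ) (b : β) :
    ∑ a, pmass p (fun ω => (Z ω, (X ω, Y ω))) (c, (a, b))
      = pmass p (fun ω => (Z ω, Y ω)) (c, b) := by
  simp only [pmass]; rw [Finset.sum_comm]; simp [Prod.ext_iff, ite_and]

lemma sum_pmass_triple_right [Fintype β] (Z : Ω → γ) (X : Ω → α) (Y : Ω → β) (c : γ) (a : α) :
    ∑ b, pmass p (fun ω => (Z ω, (X ω, Y ω))) (c, (a, b))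
      = pmass p (fun ω => (Z ω, X ω)) (c, a) := by
  simp only [pmass]; rw [Finset.sum_comm]; simp [Prod.ext_iff, ite_and]

variable {p} [Fintype α] [Fintype β] [Fintype γ]

lemma ent_le_ent_pair (hp0 : ∀ ω, 0 ≤ p ω) (X : Ω → α) (Y : Ω → β) :
    ent p Y ≤ ent p (fun ω => (X ω, Y ω)) := by
  simp only [ent_eq_sum_negMulLog, Fintype.sum_prod_type]
  rw [Finset.sum_comm]
  gcongr with b
  rw [← sum_pmass_pair_left p X Y b]
  exact negMulLog_sum_le _ _ fun a _ => pmass_nonneg p hp0 _ _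

lemma ent_triple_add_ent_le (hp0 : ∀ ω, 0 ≤ p ω) (Z : Ω → γ) (X : Ω → α) (Y : Ω → β) :
    ent p (fun ω => (Z ω, (X ω, Y ω))) + ent p Z
      ≤ ent p (fun ω => (Z ω, X ω)) + ent p (fun ω => (Z ω, Y ω)) := by
  simp only [ent_eq_sum_negMulLog, ← add_div, Fintype.sum_prod_type, ← Finset.sum_add_distrib]
  gcongr ?_ / _
  refine Finset.sum_le_sum fun c _ => ?_
  rw [← sum_pmass_pair_right p Z X c]
  simp only [← sum_pmass_triple_left p Z X Y, ← sum_pmass_triple_right p Z X Y]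
  exact sum_negMulLog_add_negMulLog_sum_le _ fun a b => pmass_nonneg p hp0 _ _

end

theorem stmt_1_general {Ω α β γ : Type} [Fintype Ω] [Fintype α] [Fintype β] [Fintype γ]
    [DecidableEq α] [DecidableEq β] [DecidableEq γ]
    (p : Ω → ℝ) (hp0 : ∀ ω, 0 ≤ p ω)
    (X : Ω → α) (Y : Ω → β) (Z : Ω → γ)
    (hZX : condEnt p Z X = 0) (hZY : condEnt p Z Y = 0) :
    ent p Z ≤ mutualInfo p X Y := by
  have hsub := ent_triple_add_ent_le hp0 Z X Y
  have hmono := ent_le_ent_pair hp0 Z fun ω => (X ω, Y ω)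
  rw [condEnt, sub_eq_zero] at hZX hZY
  rw [mutualInfo]
  linarith

/-- If `H(Z|X) = 0` and `H(Z|Y) = 0` then `I(X;Y) ≥ H(Z)`. -/
theorem stmt_1 {Ω α β γ : Type} [Fintype Ω] [Fintype α] [Fintype β] [Fintype γ]
    [DecidableEq α] [DecidableEq β] [DecidableEq γ]
    (p : Ω → ℝ) (hp0 : ∀ ω, 0 ≤ p ω) (hp1 : ∑ ω, p ω = 1)
    (X : Ω → α) (Y : Ω → β) (Z : Ω → γ)
    (hZX : condEnt p Z X = 0) (hZY : condEnt p Z Y = 0) :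
    ent p Z ≤ mutualInfo p X Y :=
  stmt_1_general p hp0 X Y Z hZX hZY
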